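/- arXiv:1504.02632 — 2 statements merged into one kernel-verified Lean document; each statement's English description precedes it below -/
import Mathlib

section
/- In the twisted group algebra A(S_n), the elements t_a* = X_{a,a+1}·t_a satisfy the braid relation t_a* · t_{a+1}* · t_a* = t_{a+1}* · t_a* · t_{a+1}* for 1 ≤ a ≤ n-2. -/
open MvPolynomial

/-- The polynomial ring `R_n = ℂ[X_{ab} : 1 ≤ a,b ≤ n]` in `n²` commuting variables. -/
abbrev R (n : ℕ) : Type := MvPolynomial (Fin n × Fin n) ℂ

/-- The action of `S_n` on `R_n`: `g.X_{ab} = X_{g(a) g(b)}`. -/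
noncomputable def permAct {n : ℕ} (g : Equiv.Perm (Fin n)) (p : R n) : R n :=
  MvPolynomial.rename (fun ab => (g ab.1, g ab.2)) p

/-- The twisted group algebra `A(S_n) = R_n ⋊ ℂ[S_n]`, as formal `R_n`-linear
combinations of permutations. -/
abbrev A (n : ℕ) : Type := Equiv.Perm (Fin n) →₀ R n

/-- The identity element `id = 1·id` of `A(S_n)`. -/
noncomputable instance {n : ℕ} : One (A n) := ⟨Finsupp.single 1 1⟩

/-- The twisted multiplication `(p₁ g₁)·(p₂ g₂) = (p₁ · (g₁.p₂)) g₁g₂` on `A(S_n)`. -/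
noncomputable instance {n : ℕ} : Mul (A n) :=
  ⟨fun x y => x.sum fun g₁ p₁ => y.sum fun g₂ p₂ =>
    Finsupp.single (g₁ * g₂) (p₁ * permAct g₁ p₂)⟩

/-- The set of inversions `I(g) = {(a,b) : a < b, g(a) > g(b)}`. -/
def inversions {n : ℕ} (g : Equiv.Perm (Fin n)) : Finset (Fin n × Fin n) :=
  Finset.univ.filter fun ab => ab.1 < ab.2 ∧ g ab.2 < g ab.1

/-- The monomial `X_g = ∏_{(a,b) ∈ I(g⁻¹)} X_{ab}`. -/
noncomputable def Xg {n : ℕ} (g : Equiv.Perm (Fin n)) : R n :=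
  ∏ ab ∈ inversions g⁻¹, MvPolynomial.X ab

/-- The element `g* = X_g · g ∈ A(S_n)`. -/
noncomputable def gstar {n : ℕ} (g : Equiv.Perm (Fin n)) : A n :=
  Finsupp.single g (Xg g)

/-- The cycle `t_{k,j}` sending `m ↦ m+1` for `j ≤ m ≤ k-1` and `k ↦ j`,
fixing all points outside `[j,k]` (meaningful for `j ≤ k`). -/
def cyc {n : ℕ} [NeZero n] (k j : Fin n) : Equiv.Perm (Fin n) :=
  Equiv.permCongr (Equiv.addLeft j) (Fin.cycleRange (k - j))


lemma single_mul_single {n : ℕ} (g₁ g₂ : Equiv.Perm (Fin n)) (p₁ p₂ : R n) :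
    (Finsupp.single g₁ p₁ : A n) * Finsupp.single g₂ p₂ =
      Finsupp.single (g₁ * g₂) (p₁ * permAct g₁ p₂) := by
  show ((Finsupp.single g₁ p₁ : A n).sum fun h₁ q₁ =>
      (Finsupp.single g₂ p₂ : A n).sum fun h₂ q₂ =>
        Finsupp.single (h₁ * h₂) (q₁ * permAct h₁ q₂)) = _
  rw [Finsupp.sum_single_index, Finsupp.sum_single_index]
  · simp [permAct]
  · simp

/-- the braid relation `t_a*·t_{a+1}*·t_a* = t_{a+1}*·t_a*·t_{a+1}*`
where `t_a* = X_{a,a+1}·t_a`. -/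
theorem tstar_braid {n : ℕ} (a b c : Fin n)
    (hb : (b : ℕ) = (a : ℕ) + 1) (hc : (c : ℕ) = (b : ℕ) + 1)
    (ta tb : A n)
    (hta : ta = Finsupp.single (Equiv.swap a b) (MvPolynomial.X (a, b)))
    (htb : tb = Finsupp.single (Equiv.swap b c) (MvPolynomial.X (b, c))) :
    ta * tb * ta = tb * ta * tb := by
  have hab : a ≠ b := fun h => by simp [h] at hb
  have hbc : b ≠ c := fun h => by simp [h] at hc
  have hac : a ≠ c := fun h => by omega
  have hca : c ≠ a := hac.symm
  have hcb : c ≠ b := hbc.symm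
  have hba : b ≠ a := hab.symm
  subst hta htb
  rw [single_mul_single, single_mul_single, single_mul_single, single_mul_single]
  congr 1
  · ext x
    simp only [Equiv.Perm.mul_apply]
    rcases eq_or_ne x a with rfl | hxa
    · simp [Equiv.swap_apply_of_ne_of_ne, hab, hac, hba, hbc, hca, hcb]
    rcases eq_or_ne x b with rfl | hxb
    · simp [Equiv.swap_apply_of_ne_of_ne, hab, hac, hba, hbc, hca, hcb]
    rcases eq_or_ne x c with rfl | hxc
    · simp [Equiv.swap_apply_of_ne_of_ne, hab, hac, hba, hbc, hca, hcb]
    · simp [Equiv.swap_apply_of_ne_of_ne, hxa, hxb, hxc]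
  · simp only [permAct, map_mul, rename_X, Equiv.Perm.mul_apply]
    simp [Equiv.swap_apply_left, Equiv.swap_apply_right,
      Equiv.swap_apply_of_ne_of_ne, hab, hbc, hac, hca, hcb, hba]
    ring
end

section
/- In the twisted group algebra A(S_n), for 1 ≤ k ≤ m < p ≤ n the commutation rule t_{m,k}* · t_{p,k}* = (t_k*)² · t_{p,k+1}* · t_{m-1,k}* holds, where (t_k*)² = X_{k,k+1}·X_{k+1,k}·id. -/
open MvPolynomial

/-! Both sides are a monomial times a single permutation. On the group side,
`t_{m,k} t_{p,k} = t_{p,k+1} t_{m-1,k}`, checked pointwise. On the coefficient side, the only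
inversions of `t_{q,j}⁻¹` are the pairs `(j,b)` with `j < b ≤ q`, so
`X_{t_{q,j}} = ∏_{j<b≤q} X_{jb}`; twisting by `t_{m,k}` resp. `t_{p,k+1}` relabels the index set,
and both sides become `X_{k,k+1} X_{k+1,k} ∏_{k+1<b≤m} X_{kb} ∏_{k+1<b≤p} X_{k+1,b}`. -/

lemma cyc_apply_eq_add {n : ℕ} [NeZero n] (q j x : Fin n) :
    cyc q j x = j + Fin.cycleRange (q - j) (x - j) := by
  simp [cyc, sub_eq_neg_add]

lemma val_cyc_apply {n : ℕ} [NeZero n] {q j : Fin n} (hjq : j ≤ q) (x : Fin n) :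
    (cyc q j x : ℕ) =
      if x < j then (x : ℕ) else if x < q then (x : ℕ) + 1 else if x = q then j else x := by
  have hqj : ((q - j : Fin n) : ℕ) = q - j := Fin.coe_sub_iff_le.2 hjq
  have hxj : (j ≤ x → ((x - j : Fin n) : ℕ) = x - j) ∧
      (x < j → ((x - j : Fin n) : ℕ) = n + x - j) :=
    ⟨Fin.coe_sub_iff_le.2, Fin.coe_sub_iff_lt.2⟩
  rw [cyc_apply_eq_add, Fin.val_add_eq_ite]
  rcases lt_trichotomy (x - j) (q - j) with h | h | h
  · rw [Fin.coe_cycleRange_of_lt h]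
    split_ifs <;> omega
  · rw [Fin.cycleRange_of_eq h, Fin.val_zero]
    split_ifs <;> omega
  · rw [Fin.cycleRange_of_gt h]
    split_ifs <;> omega

lemma val_cyc_inv_apply {n : ℕ} [NeZero n] {q j : Fin n} (hjq : j ≤ q) (x : Fin n) :
    ((cyc q j)⁻¹ x : ℕ) =
      if x < j then (x : ℕ) else if x = j then q else if x ≤ q then (x : ℕ) - 1 else x := by
  set v : ℕ := if x < j then (x : ℕ) else if x = j then q else if x ≤ q then (x : ℕ) - 1 else x
    with hv
  have hvn : v < n := by split_ifs at hv <;> omega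
  suffices (cyc q j)⁻¹ x = ⟨v, hvn⟩ by rw [this]
  rw [Equiv.Perm.inv_eq_iff_eq, Fin.ext_iff, val_cyc_apply hjq]
  simp only [Fin.lt_def, Fin.ext_iff]
  split_ifs at hv <;> split_ifs <;> omega

lemma cyc_apply_of_lt {n : ℕ} [NeZero n] {q j x : Fin n} (hjq : j ≤ q) (hx : x < j) :
    cyc q j x = x :=
  Fin.ext (by rw [val_cyc_apply hjq, if_pos hx])

lemma val_cyc_apply_left {n : ℕ} [NeZero n] {i j : Fin n} (hji : j < i) :
    (cyc i j j : ℕ) = j + 1 := by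
  rw [val_cyc_apply hji.le, if_neg (lt_irrefl j), if_pos hji]

lemma cyc_mul_cyc {n : ℕ} [NeZero n] {j j' i i' q : Fin n}
    (hj : (j' : ℕ) = j + 1) (hi : (i' : ℕ) + 1 = i) (hji : j < i) (hiq : i < q) :
    cyc i j * cyc q j = cyc q j' * cyc i' j := by
  ext x
  have h1 := val_cyc_apply hji.le (cyc q j x)
  have h2 := val_cyc_apply (hji.trans hiq).le x
  have h3 := val_cyc_apply (show j' ≤ q by omega) (cyc i' j x)
  have h4 := val_cyc_apply (show j ≤ i' by omega) x
  simp only [Equiv.Perm.mul_apply]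
  split_ifs at h1 h2 h3 h4 <;> omega

lemma inversions_cyc_inv {n : ℕ} [NeZero n] {q j : Fin n} (hjq : j ≤ q) :
    inversions (cyc q j)⁻¹ = (Finset.Ioc j q).image (Prod.mk j) := by
  ext ⟨a, b⟩
  simp only [inversions, Finset.mem_filter, Finset.mem_univ, true_and, Finset.mem_image,
    Finset.mem_Ioc, Prod.mk.injEq, Fin.lt_def, val_cyc_inv_apply hjq]
  constructor
  · rintro ⟨hab, hinv⟩
    exact ⟨b, by split_ifs at hinv <;> omega⟩
  · rintro ⟨c, hc, rfl, rfl⟩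
    split_ifs <;> omega

lemma Xg_cyc {n : ℕ} [NeZero n] {q j : Fin n} (hjq : j ≤ q) :
    Xg (cyc q j) = ∏ b ∈ Finset.Ioc j q, (X (j, b) : R n) := by
  rw [Xg, inversions_cyc_inv hjq, Finset.prod_image fun _ _ _ _ h => Prod.mk_right_injective j h]

lemma map_Ioc_cyc_eq_insert {n : ℕ} [NeZero n] {j j' i q : Fin n} (hj : (j' : ℕ) = j + 1)
    (hji : j < i) (hiq : i ≤ q) :
    (Finset.Ioc j q).map (cyc i j).toEmbedding = insert j (Finset.Ioc j' q) := by
  ext y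
  simp only [Finset.mem_map_equiv, ← Equiv.Perm.inv_def, Finset.mem_insert, Finset.mem_Ioc]
  have := val_cyc_inv_apply hji.le y
  split_ifs at this <;> omega

lemma map_Ioc_cyc_eq_Ioc {n : ℕ} [NeZero n] {j j' i i' q : Fin n} (hj : (j' : ℕ) = j + 1)
    (hi : (i' : ℕ) + 1 = i) (hji : j < i) (hiq : i ≤ q) :
    (Finset.Ioc j i').map (cyc q j').toEmbedding = Finset.Ioc j' i := by
  ext y
  simp only [Finset.mem_map_equiv, ← Equiv.Perm.inv_def, Finset.mem_Ioc]
  have := val_cyc_inv_apply (show j' ≤ q by omega) y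
  split_ifs at this <;> omega

lemma permAct_one {n : ℕ} (q : R n) : permAct 1 q = q :=
  rename_id_apply q

lemma permAct_prod_X {n : ℕ} (g : Equiv.Perm (Fin n)) (c : Fin n) (s : Finset (Fin n)) :
    permAct g (∏ b ∈ s, (X (c, b) : R n)) = ∏ b ∈ s.map g.toEmbedding, (X (g c, b) : R n) := by
  simp [permAct, Finset.prod_map]

namespace A

lemma single_mul_single {n : ℕ} (g h : Equiv.Perm (Fin n)) (p q : R n) :
    (Finsupp.single g p * Finsupp.single h q : A n) =
      Finsupp.single (g * h) (p * permAct g q) := by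
  change (Finsupp.single g p).sum (fun g₁ p₁ => (Finsupp.single h q).sum fun g₂ p₂ =>
    Finsupp.single (g₁ * g₂) (p₁ * permAct g₁ p₂)) = _
  simp [permAct]

lemma smul_one {n : ℕ} (r : R n) : r • (1 : A n) = Finsupp.single 1 r := by
  change r • Finsupp.single (1 : Equiv.Perm (Fin n)) (1 : R n) = _
  rw [Finsupp.smul_single, smul_eq_mul, mul_one]

end A

/-- the commutation rule
`t_{m,k}*·t_{p,k}* = (t_k*)²·t_{p,k+1}*·t_{m-1,k}*` for `k+1 ≤ m < p ≤ n`,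
where `(t_k*)² = X_{k,k+1}X_{k+1,k}·id`. -/
theorem cycle_commutation_rule {n : ℕ} [NeZero n] (k k1 m m1 p : Fin n)
    (hk1 : (k1 : ℕ) = (k : ℕ) + 1) (hm1 : (m1 : ℕ) + 1 = (m : ℕ))
    (hkm : k < m) (hmp : m < p) :
    gstar (cyc m k) * gstar (cyc p k) =
      ((MvPolynomial.X (k, k1) * MvPolynomial.X (k1, k) : R n) • (1 : A n)) *
        gstar (cyc p k1) * gstar (cyc m1 k) := by
  have hmk : cyc m k k = k1 := Fin.ext (by rw [val_cyc_apply_left hkm, hk1])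
  have hpk : cyc p k1 k = k := cyc_apply_of_lt (by omega) (by omega)
  have hIoc : Finset.Ioc k m = insert k1 (Finset.Ioc k1 m) := by
    ext y
    simp only [Finset.mem_insert, Finset.mem_Ioc]
    omega
  rw [gstar, gstar, gstar, gstar, A.smul_one, A.single_mul_single, A.single_mul_single,
    A.single_mul_single, one_mul, permAct_one, cyc_mul_cyc hk1 hm1 hkm hmp]
  refine congrArg (Finsupp.single _) ?_
  rw [Xg_cyc hkm.le, Xg_cyc (hkm.trans hmp).le, Xg_cyc (by omega), Xg_cyc (by omega),
    permAct_prod_X, permAct_prod_X, hmk, hpk, map_Ioc_cyc_eq_insert hk1 hkm hmp.le,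
    map_Ioc_cyc_eq_Ioc hk1 hm1 hkm hmp.le, hIoc, Finset.prod_insert Finset.left_notMem_Ioc,
    Finset.prod_insert (by simp only [Finset.mem_Ioc]; omega)]
  ring
end
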